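/- arXiv:0801.0072 — 3 statements merged into one kernel-verified Lean document; each statement's English description precedes it below -/
import Mathlib

section
/- Let U(n,k) be the number of permutations of {1,…,n} with up-down index k. Then for all integers n > t ≥ 1, U(n, 2^{t-1}) = C(n,t) − 1, where C(n,t) is the binomial coefficient. -/
open Finset

/-- The up-down index of a permutation of `Fin n`: bit `n-2-i` is 1 iff position `i` is an ascent. -/
def updownIndex (n : ℕ) (π : Equiv.Perm (Fin n)) : ℕ :=
  ∑ i : Fin (n - 1),
    if π ⟨i.val + 1, by have := i.isLt; omega⟩ > π ⟨i.val, by have := i.isLt; omega⟩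
    then 2 ^ (n - 2 - i.val) else 0

/-- The number of permutations of `{1, ..., n}` with up-down index `k`. -/
def U (n k : ℕ) : ℕ :=
  (Finset.univ.filter (fun π : Equiv.Perm (Fin n) => updownIndex n π = k)).card

/-!
Write `n = m + 1`. The up-down index is the binary number whose set bits are the positions
`m - 1 - i` of the ascents `i`, so index `2 ^ (t - 1)` means that the ascent set is exactly `{c}`
with `c = m - t`. A permutation whose ascents lie in `{c}` is strictly decreasing on the block
`[0, c]` and on its complement, hence determined by the set of values it takes on `[0, c]`, and
every `(c + 1)`-subset occurs: there are `C(n, c + 1) = C(n, t)` of them. Exactly one of them, the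
reversal, has no ascent at all.
-/

open Equiv

theorem Equiv.subtypeCongr_apply_of_pos {α : Type*} {p q : α → Prop} [DecidablePred p]
    [DecidablePred q] (e : {x // p x} ≃ {x // q x}) (f : {x // ¬p x} ≃ {x // ¬q x}) {a : α}
    (h : p a) : e.subtypeCongr f a = e ⟨a, h⟩ := by
  simp [Equiv.subtypeCongr, sumCompl_symm_apply_of_pos h]

theorem Equiv.subtypeCongr_apply_of_neg {α : Type*} {p q : α → Prop} [DecidablePred p]
    [DecidablePred q] (e : {x // p x} ≃ {x // q x}) (f : {x // ¬p x} ≃ {x // ¬q x}) {a : α}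
    (h : ¬p a) : e.subtypeCongr f a = f ⟨a, h⟩ := by
  simp [Equiv.subtypeCongr, sumCompl_symm_apply_of_neg h]

theorem StrictAntiOn.eqOn_of_image_eq {α β : Type*} [LinearOrder α] [Preorder β] {f g : α → β}
    {s : Set α} (hs : s.Finite) (hf : StrictAntiOn f s) (hg : StrictAntiOn g s)
    (h : f '' s = g '' s) : s.EqOn f g := by
  have := hs.to_subtype
  rw [Set.strictAntiOn_iff_strictAnti] at hf hg
  have hfg := (hf.range_inj hg).1 (by simpa only [← Set.image_eq_range] using h)
  exact fun x hx => congrFun hfg ⟨x, hx⟩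

theorem nonempty_orderIso_orderDual_of_card_eq {β γ : Type*} [Fintype β] [LinearOrder β]
    [Fintype γ] [LinearOrder γ] (h : Fintype.card β = Fintype.card γ) : Nonempty (β ≃o γᵒᵈ) :=
  ⟨(Fintype.orderIsoFinOfCardEq β h).symm.trans
    (Fin.revOrderIso.symm.trans (Fintype.orderIsoFinOfCardEq γ rfl).dual)⟩

theorem Fin.strictAntiOn_iff_succ_lt {m : ℕ} {β : Type*} [Preorder β] {f : Fin (m + 1) → β}
    {s : Set (Fin (m + 1))} (hs : s.OrdConnected) :
    StrictAntiOn f s ↔ ∀ i : Fin m, i.castSucc ∈ s → i.succ ∈ s → f i.succ < f i.castSucc := by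
  refine ⟨fun hf i hi hi' => hf hi hi' i.castSucc_lt_succ, fun h => ?_⟩
  refine strictAntiOn_of_succ_lt hs fun a ha => ?_
  obtain ⟨i, rfl⟩ := (Fin.exists_castSucc_eq (i := a)).2 <| by
    rintro rfl
    exact ha (isMax_iff_eq_top.2 rfl)
  rw [Fin.orderSucc_castSucc]
  exact h i

namespace Equiv.Perm

section Blocks
variable {α : Type*} [LinearOrder α]

theorem eq_of_strictAntiOn_of_image_eq [Finite α] {π σ : Perm α} {s : Set α}
    (hπ : StrictAntiOn π s) (hπc : StrictAntiOn π sᶜ) (hσ : StrictAntiOn σ s)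
    (hσc : StrictAntiOn σ sᶜ) (h : π '' s = σ '' s) : π = σ := by
  have hc : π '' sᶜ = σ '' sᶜ := by
    rw [Set.image_compl_eq π.bijective, Set.image_compl_eq σ.bijective, h]
  ext x
  by_cases hx : x ∈ s
  · rw [hπ.eqOn_of_image_eq s.toFinite hσ h hx]
  · rw [hπc.eqOn_of_image_eq sᶜ.toFinite hσc hc hx]

variable [Fintype α]

theorem exists_strictAntiOn_image_eq (s t : Finset α) (h : #s = #t) :
    ∃ π : Perm α, StrictAntiOn π s ∧ StrictAntiOn π (↑s)ᶜ ∧ s.image π = t := by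
  obtain ⟨e₁⟩ := nonempty_orderIso_orderDual_of_card_eq (β := {x // x ∈ s}) (γ := {x // x ∈ t})
    (by simpa using h)
  obtain ⟨e₂⟩ := nonempty_orderIso_orderDual_of_card_eq (β := {x // x ∉ s}) (γ := {x // x ∉ t})
    (by simp [Fintype.card_subtype_compl, h])
  refine ⟨(e₁.toEquiv.trans OrderDual.ofDual).subtypeCongr (e₂.toEquiv.trans OrderDual.ofDual),
    fun x hx y hy hxy => ?_, fun x hx y hy hxy => ?_, ?_⟩
  · rw [subtypeCongr_apply_of_pos _ _ hx, subtypeCongr_apply_of_pos _ _ hy]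
    exact Subtype.coe_lt_coe.2 (e₁.strictMono (show (⟨x, hx⟩ : {x // x ∈ s}) < ⟨y, hy⟩ from hxy))
  · rw [subtypeCongr_apply_of_neg _ _ hx, subtypeCongr_apply_of_neg _ _ hy]
    exact Subtype.coe_lt_coe.2 (e₂.strictMono (show (⟨x, hx⟩ : {x // x ∉ s}) < ⟨y, hy⟩ from hxy))
  · ext y
    simp only [Finset.mem_image]
    constructor
    · rintro ⟨x, hx, rfl⟩
      rw [subtypeCongr_apply_of_pos _ _ hx]
      exact (OrderDual.ofDual (e₁ ⟨x, hx⟩)).2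
    · intro hy
      refine ⟨e₁.symm (OrderDual.toDual ⟨y, hy⟩), (e₁.symm _).2, ?_⟩
      rw [subtypeCongr_apply_of_pos _ _ (e₁.symm _).2]
      simp

theorem card_strictAntiOn_and_strictAntiOn_compl (s : Finset α)
    [DecidablePred fun π : Perm α => StrictAntiOn π s ∧ StrictAntiOn π (↑s)ᶜ] :
    #{π : Perm α | StrictAntiOn π s ∧ StrictAntiOn π (↑s)ᶜ} = (Fintype.card α).choose #s := by
  rw [← Finset.card_univ, ← Finset.card_powersetCard]
  refine Finset.card_nbij (fun π => s.image π) (fun π _ => ?_) (fun π hπ σ hσ h => ?_)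
    (fun t ht => ?_)
  · simp [Finset.card_image_of_injective s π.injective]
  · simp only [coe_filter, mem_univ, true_and] at hπ hσ
    exact eq_of_strictAntiOn_of_image_eq hπ.1 hπ.2 hσ.1 hσ.2
      (by simpa only [Finset.coe_image] using congrArg ((↑) : Finset α → Set α) h)
  · obtain ⟨π, hπ, hπc, rfl⟩ := exists_strictAntiOn_image_eq s t
      (by simpa using (Finset.mem_powersetCard.1 ht).2.symm)
    exact ⟨π, by simp [hπ, hπc], rfl⟩

end Blocks

section Ascents
variable {m : ℕ}

def ascentSet (π : Perm (Fin (m + 1))) : Finset (Fin m) := {i | π i.castSucc < π i.succ}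

theorem mem_ascentSet {π : Perm (Fin (m + 1))} {i : Fin m} :
    i ∈ π.ascentSet ↔ π i.castSucc < π i.succ := by
  simp [ascentSet]

theorem notMem_ascentSet {π : Perm (Fin (m + 1))} {i : Fin m} :
    i ∉ π.ascentSet ↔ π i.succ < π i.castSucc := by
  rw [mem_ascentSet, not_lt]
  exact (π.injective.ne i.castSucc_lt_succ.ne').le_iff_lt

-- `rfl`: `Fin (m + 1 - 1)` and `m + 1 - 2 - i` reduce to `Fin m` and `m - 1 - i`.
theorem updownIndex_eq_sum_ascentSet (π : Perm (Fin (m + 1))) :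
    updownIndex (m + 1) π = ∑ i ∈ π.ascentSet, 2 ^ (m - 1 - i) := by
  rw [ascentSet, Finset.sum_filter]
  rfl

theorem updownIndex_eq_two_pow_iff (π : Perm (Fin (m + 1))) (c : Fin m) :
    updownIndex (m + 1) π = 2 ^ (m - 1 - c) ↔ π.ascentSet = {c} := by
  let e : Fin m ↪ ℕ := Fin.revPerm.toEmbedding.trans Fin.valEmbedding
  have key (A : Finset (Fin m)) : ∑ i ∈ A, 2 ^ (m - 1 - i) = ∑ j ∈ A.map e, 2 ^ j := by
    rw [Finset.sum_map]
    refine Finset.sum_congr rfl fun i _ => ?_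
    simp only [e, Function.Embedding.trans_apply, Equiv.coe_toEmbedding, Fin.revPerm_apply,
      Fin.valEmbedding_apply, Fin.val_rev]
    congr 1
    omega
  rw [updownIndex_eq_sum_ascentSet, ← Finset.sum_singleton (fun i : Fin m => 2 ^ (m - 1 - i)) c,
    key, key, (Finset.geomSum_injective le_rfl).eq_iff, Finset.map_inj]

theorem ascentSet_subset_singleton_iff (π : Perm (Fin (m + 1))) (c : Fin m) :
    π.ascentSet ⊆ {c} ↔
      StrictAntiOn π (Set.Iic c.castSucc) ∧ StrictAntiOn π (Set.Ioi c.castSucc) := by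
  simp only [Fin.strictAntiOn_iff_succ_lt Set.ordConnected_Iic,
    Fin.strictAntiOn_iff_succ_lt Set.ordConnected_Ioi, Set.mem_Iic, Set.mem_Ioi,
    Fin.succ_le_castSucc_iff, Fin.castSucc_lt_castSucc_iff, ← notMem_ascentSet]
  constructor
  · intro h
    refine ⟨fun i _ hi hmem => ?_, fun i hi _ hmem => ?_⟩
    · exact hi.ne (Finset.mem_singleton.1 (h hmem))
    · exact hi.ne' (Finset.mem_singleton.1 (h hmem))
  · rintro ⟨hlo, hhi⟩ i hi
    rw [Finset.mem_singleton]
    by_contra hne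
    rcases lt_or_gt_of_ne hne with hlt | hgt
    · exact hlo i hlt.le hlt hi
    · exact hhi i hgt (Fin.castSucc_lt_succ_iff.2 hgt.le) hi

theorem ascentSet_eq_empty_iff (π : Perm (Fin (m + 1))) :
    π.ascentSet = ∅ ↔ π = Fin.revPerm := by
  constructor
  · intro h
    have hπ : StrictAnti π :=
      Fin.strictAnti_iff_succ_lt.2 fun i => notMem_ascentSet.1 (by simp [h])
    refine Equiv.coe_fn_injective ((hπ.range_inj Fin.rev_strictAnti).1 ?_)
    simp
  · rintro rfl
    refine Finset.eq_empty_of_forall_notMem fun i => notMem_ascentSet.2 ?_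
    simp [Fin.rev_lt_rev, i.castSucc_lt_succ]

theorem card_ascentSet_subset_singleton (c : Fin m) :
    #{π : Perm (Fin (m + 1)) | π.ascentSet ⊆ {c}} = (m + 1).choose (c + 1) := by
  classical
  have h := card_strictAntiOn_and_strictAntiOn_compl (Finset.Iic c.castSucc)
  simp only [Finset.coe_Iic, Set.compl_Iic, Fintype.card_fin, Fin.card_Iic,
    Fin.val_castSucc] at h
  rw [Finset.filter_congr fun π _ => ascentSet_subset_singleton_iff π c]
  convert h using 2

theorem card_ascentSet_eq_singleton (c : Fin m) :
    #{π : Perm (Fin (m + 1)) | π.ascentSet = {c}} = (m + 1).choose (c + 1) - 1 := by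
  have hsplit : ({π | π.ascentSet = {c}} : Finset (Perm (Fin (m + 1)))) =
      ({π | π.ascentSet ⊆ {c}} : Finset _).erase Fin.revPerm := by
    ext π
    simp only [Finset.mem_filter, Finset.mem_univ, true_and, Finset.mem_erase,
      Finset.subset_singleton_iff, ne_eq, ← ascentSet_eq_empty_iff]
    constructor
    · intro h
      simp [h]
    · rintro ⟨hne, h | h⟩
      exacts [absurd h hne, h]
  have hrev : Fin.revPerm ∈ ({π | π.ascentSet ⊆ {c}} : Finset (Perm (Fin (m + 1)))) := by
    simp [(ascentSet_eq_empty_iff _).2 rfl]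
  rw [hsplit, Finset.card_erase_of_mem hrev, card_ascentSet_subset_singleton]

end Ascents

end Equiv.Perm

theorem U_single_ascent (n t : ℕ) (ht : 1 ≤ t) (htn : t < n) :
    U n (2 ^ (t - 1)) = Nat.choose n t - 1 := by
  obtain ⟨m, rfl⟩ : ∃ m, n = m + 1 := ⟨n - 1, by omega⟩
  set c : Fin m := ⟨m - t, by omega⟩
  have hpow : t - 1 = m - 1 - c := by
    simp only [c]
    omega
  rw [U, hpow, Finset.filter_congr fun π _ => Perm.updownIndex_eq_two_pow_iff π c,
    Perm.card_ascentSet_eq_singleton, Nat.choose_symm_of_eq_add]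
  simp only [c]
  omega
end

section
/- Let U(n,k) be the number of permutations of {1,…,n} with up-down index k. Then for all integers n > t > u ≥ 1, U(n, 2^{t-1}+2^{u-1}) = (C(t,u) − 1)·C(n,t) − C(n,u) + 1. -/
open Finset

/-!
Reading the up-down index in binary, `π` has index `2^(t-1) + 2^(u-1)` iff its ascents sit
exactly between positions `p - 1, p` and `q - 1, q` (0-indexed), where `p = n - t < q = n - u`.
By inclusion–exclusion over the subsets of these two cut points it suffices to count the
permutations whose ascents all lie at the cuts `p` and `q`, i.e. which decrease on each of the
blocks `[0, p)`, `[p, q)`, `[q, n)`. Such a permutation is determined by the value sets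
`Y ⊆ X` of its first `p` and first `q` entries: it lists the values in the order of the key
(block of the value, decreasing value), i.e. it is `Tuple.sort` of that key. Hence there are
`C(n, q) C(q, p)` of them (`C(n, p)`, `C(n, q)` and `1` with a single cut or none), and
`C(n, n-u) C(n-u, n-t) = C(n, t) C(t, u)`.
-/

theorem Finset.subset_pair_iff {β : Type*} [DecidableEq β] {t : Finset β} {a b : β} :
    t ⊆ {a, b} ↔ t = {a, b} ∨ t ⊆ {a} ∨ t ⊆ {b} := by
  refine ⟨fun h => ?_, ?_⟩
  · by_cases ha : a ∈ t
    · by_cases hb : b ∈ t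
      · exact Or.inl (h.antisymm (insert_subset ha (singleton_subset_iff.2 hb)))
      · exact Or.inr (Or.inl fun x hx => by grind)
    · exact Or.inr (Or.inr fun x hx => by grind)
  · rintro (rfl | h | h)
    · rfl
    · exact h.trans (by simp)
    · exact h.trans (by simp)

theorem Finset.card_filter_eq_pair_add {α β : Type*} [DecidableEq α] [DecidableEq β]
    (s : Finset α) (f : α → Finset β) {a b : β} (hab : a ≠ b) :
    #{x ∈ s | f x = {a, b}} + #{x ∈ s | f x ⊆ {a}} + #{x ∈ s | f x ⊆ {b}} =
      #{x ∈ s | f x ⊆ {a, b}} + #{x ∈ s | f x ⊆ ∅} := by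
  have hsplit : #{x ∈ s | f x ⊆ {a, b}} =
      #{x ∈ s | f x = {a, b}} + #{x ∈ s | f x ⊆ {a} ∨ f x ⊆ {b}} := by
    rw [← card_union_of_disjoint, ← filter_or]
    · simp only [subset_pair_iff]
    · refine disjoint_filter.2 fun x _ hx h => ?_
      rw [hx] at h
      rcases h with h | h
      · exact hab.symm (mem_singleton.1 (h (by simp)))
      · exact hab (mem_singleton.1 (h (by simp)))
  have hinter : #{x ∈ s | f x ⊆ {a} ∨ f x ⊆ {b}} + #{x ∈ s | f x ⊆ ∅} =
      #{x ∈ s | f x ⊆ {a}} + #{x ∈ s | f x ⊆ {b}} := by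
    rw [filter_or, ← card_union_add_card_inter {x ∈ s | f x ⊆ {a}}, ← filter_and]
    simp only [← subset_inter_iff, singleton_inter_of_notMem (mem_singleton.not.2 hab)]
  omega

theorem Finset.card_sigma_powersetCard {α : Type*} (s : Finset α) (p q : ℕ) :
    #((s.powersetCard q).sigma fun X => X.powersetCard p) = (#s).choose q * q.choose p := by
  rw [card_sigma, sum_congr rfl fun X hX => by rw [card_powersetCard, (mem_powersetCard.1 hX).2],
    sum_const, card_powersetCard, smul_eq_mul]

section

variable {n : ℕ}

theorem Fin.monotone_iff_le_add_one {α : Type*} [Preorder α] {f : Fin n → α} :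
    Monotone f ↔ ∀ i : Fin (n - 1),
      f ⟨i.val, by have := i.isLt; omega⟩ ≤ f ⟨i.val + 1, by have := i.isLt; omega⟩ := by
  cases n with
  | zero => exact iff_of_true (fun a => a.elim0) fun i => i.elim0
  | succ m => exact Fin.monotone_iff_le_succ

theorem Monotone.le_iff_lt_card_filter {β : Type*} [Preorder β] [DecidableLE β] {g : Fin n → β}
    (hg : Monotone g) (c : β) (i : Fin n) : g i ≤ c ↔ i.val < #{j | g j ≤ c} := by
  constructor
  · intro h
    calc i.val < #(Iic i) := by simp
      _ ≤ _ := card_le_card fun j hj => mem_filter.2 ⟨mem_univ _, (hg (mem_Iic.1 hj)).trans h⟩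
  · intro h
    by_contra hc
    have hsub : ({j | g j ≤ c} : Finset (Fin n)) ⊆ Iio i := fun j hj =>
      mem_Iio.2 (lt_of_not_ge fun hij => hc ((hg hij).trans (by simpa using hj)))
    have := card_le_card hsub
    rw [Fin.card_Iio] at this
    omega

def ascents (π : Equiv.Perm (Fin n)) : Finset (Fin (n - 1)) :=
  {i | π ⟨i.val + 1, by have := i.isLt; omega⟩ > π ⟨i.val, by have := i.isLt; omega⟩}

theorem updownIndex_eq_sum_ascents (π : Equiv.Perm (Fin n)) :
    updownIndex n π = ∑ i ∈ ascents π, 2 ^ (n - 2 - i.val) := by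
  rw [ascents, sum_filter]
  rfl

theorem sum_two_pow_sub_injective :
    Function.Injective fun s : Finset (Fin (n - 1)) => ∑ i ∈ s, 2 ^ (n - 2 - i.val) := by
  have hrev : Function.Injective fun i : Fin (n - 1) => n - 2 - i.val := fun i j h => by
    have := i.isLt; have := j.isLt
    exact Fin.ext (by simp only at h; omega)
  intro s t hst
  simp only [← sum_image hrev.injOn] at hst
  exact image_injective hrev (geomSum_injective le_rfl hst)

theorem updownIndex_eq_iff {π : Equiv.Perm (Fin n)} {s : Finset (Fin (n - 1))} :
    updownIndex n π = ∑ i ∈ s, 2 ^ (n - 2 - i.val) ↔ ascents π = s := by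
  rw [updownIndex_eq_sum_ascents]
  exact sum_two_pow_sub_injective.eq_iff

section Blocks

variable (p q : ℕ)

def cuts (n : ℕ) : Finset (Fin (n - 1)) := {i | i.val + 1 = p ∨ i.val + 1 = q}

def cutBlock (i : ℕ) : ℕ := if i < p then 0 else if i < q then 1 else 2

def valueBlock (X Y : Finset (Fin n)) (v : Fin n) : ℕ :=
  if v ∈ Y then 0 else if v ∈ X then 1 else 2

def blockKey (X Y : Finset (Fin n)) (v : Fin n) : ℕ ×ₗ (Fin n)ᵒᵈ :=
  toLex (valueBlock X Y v, OrderDual.toDual v)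

def prefixImages (π : Equiv.Perm (Fin n)) : Σ _ : Finset (Fin n), Finset (Fin n) :=
  ⟨({v | π.symm v < q} : Finset (Fin n)), ({v | π.symm v < p} : Finset (Fin n))⟩

variable {p q}

theorem cutBlock_le_succ (i : ℕ) : cutBlock p q i ≤ cutBlock p q (i + 1) := by
  unfold cutBlock; split_ifs <;> omega

theorem cutBlock_lt_succ_iff (hpq : p ≤ q) (i : ℕ) :
    cutBlock p q i < cutBlock p q (i + 1) ↔ i + 1 = p ∨ i + 1 = q := by
  unfold cutBlock; split_ifs <;> omega

theorem cutBlock_le_zero_iff {i : ℕ} : cutBlock p q i ≤ 0 ↔ i < p := by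
  unfold cutBlock; split_ifs <;> omega

theorem cutBlock_le_one_iff (hpq : p ≤ q) {i : ℕ} : cutBlock p q i ≤ 1 ↔ i < q := by
  unfold cutBlock; split_ifs <;> omega

section ValueBlock

variable {X Y : Finset (Fin n)} {v : Fin n}

theorem valueBlock_le_two : valueBlock X Y v ≤ 2 := by
  unfold valueBlock; split_ifs <;> omega

theorem valueBlock_le_zero_iff : valueBlock X Y v ≤ 0 ↔ v ∈ Y := by
  unfold valueBlock; split_ifs <;> simp_all

theorem valueBlock_le_one_iff (hYX : Y ⊆ X) : valueBlock X Y v ≤ 1 ↔ v ∈ X := by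
  unfold valueBlock
  split_ifs with hY hX
  · simpa using hYX hY
  · simpa
  · simpa

theorem blockKey_injective (X Y : Finset (Fin n)) : Function.Injective (blockKey X Y) :=
  fun v w h => by simpa [blockKey] using congrArg (fun k => (ofLex k).2) h

end ValueBlock

theorem ascents_subset_cuts_iff_monotone (hpq : p ≤ q) {X Y : Finset (Fin n)}
    {π : Equiv.Perm (Fin n)} (hπ : ∀ i, valueBlock X Y (π i) = cutBlock p q i) :
    ascents π ⊆ cuts p q n ↔ Monotone (blockKey X Y ∘ π) := by
  rw [Fin.monotone_iff_le_add_one]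
  refine forall_congr' fun i => ?_
  simp only [ascents, cuts, mem_filter, mem_univ, true_and, Function.comp_apply, blockKey,
    Prod.Lex.toLex_le_toLex, hπ, OrderDual.toDual_le_toDual, ← cutBlock_lt_succ_iff hpq]
  have := cutBlock_le_succ (p := p) (q := q) i
  grind

theorem valueBlock_prefixImages_apply (π : Equiv.Perm (Fin n)) (i : Fin n) :
    valueBlock (prefixImages p q π).1 (prefixImages p q π).2 (π i) = cutBlock p q i := by
  simp [prefixImages, valueBlock, cutBlock]

theorem valueBlock_sort_apply (hpq : p ≤ q) {X Y : Finset (Fin n)} (hYX : Y ⊆ X)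
    (hX : #X = q) (hY : #Y = p) (i : Fin n) :
    valueBlock X Y (Tuple.sort (blockKey X Y) i) = cutBlock p q i := by
  set σ := Tuple.sort (blockKey X Y)
  have hmono : Monotone fun j => valueBlock X Y (σ j) := fun j k hjk =>
    Prod.Lex.monotone_fst _ _ (Tuple.monotone_sort (blockKey X Y) hjk)
  have hcard (c : ℕ) : #{j | valueBlock X Y (σ j) ≤ c} = #{v | valueBlock X Y v ≤ c} :=
    card_equiv σ (by simp)
  have h0 : valueBlock X Y (σ i) ≤ 0 ↔ i.val < p := by
    rw [hmono.le_iff_lt_card_filter, hcard, ← hY]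
    simp only [valueBlock_le_zero_iff, filter_mem_eq_inter, univ_inter]
  have h1 : valueBlock X Y (σ i) ≤ 1 ↔ i.val < q := by
    rw [hmono.le_iff_lt_card_filter, hcard, ← hX]
    simp only [valueBlock_le_one_iff hYX, filter_mem_eq_inter, univ_inter]
  have := valueBlock_le_two (X := X) (Y := Y) (v := σ i)
  unfold cutBlock
  split_ifs <;> omega

theorem card_ascents_subset_cuts (hpq : p ≤ q) (hqn : q ≤ n) :
    #{π : Equiv.Perm (Fin n) | ascents π ⊆ cuts p q n} = n.choose q * q.choose p := by
  have hT := card_sigma_powersetCard (univ : Finset (Fin n)) p q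
  rw [card_univ, Fintype.card_fin] at hT
  rw [← hT]
  refine card_nbij' (prefixImages p q) (fun b => Tuple.sort (blockKey b.1 b.2)) ?_ ?_ ?_ ?_
  · intro π _
    have hcard (m : ℕ) (hm : m ≤ n) : #{v | (π.symm v : ℕ) < m} = m := by
      rw [card_equiv π.symm (t := {i : Fin n | i.val < m}) (by simp), Fin.card_filter_val_lt,
        min_eq_right hm]
    simp only [prefixImages, coe_sigma, Set.mem_sigma_iff, mem_coe, mem_powersetCard, subset_univ,
      true_and, hcard q hqn, hcard p (hpq.trans hqn), and_true]
    intro v hv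
    simp only [mem_filter, mem_univ, true_and] at hv ⊢
    omega
  · rintro ⟨X, Y⟩ hXY
    simp only [coe_sigma, Set.mem_sigma_iff, mem_coe, mem_powersetCard, subset_univ, true_and] at hXY
    obtain ⟨hX, hYX, hY⟩ := hXY
    simp only [coe_filter, mem_univ, true_and, Set.mem_ofPred_eq]
    exact (ascents_subset_cuts_iff_monotone hpq (valueBlock_sort_apply hpq hYX hX hY)).2
      (Tuple.monotone_sort _)
  · intro π hπ
    simp only [coe_filter, mem_univ, true_and, Set.mem_ofPred_eq] at hπ
    refine (Tuple.eq_sort_iff.2 ⟨(ascents_subset_cuts_iff_monotone hpq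
      (valueBlock_prefixImages_apply π)).1 hπ, fun i j hij h => ?_⟩).symm
    exact absurd (π.injective (blockKey_injective _ _ h)) hij.ne
  · rintro ⟨X, Y⟩ hXY
    simp only [coe_sigma, Set.mem_sigma_iff, mem_coe, mem_powersetCard, subset_univ, true_and] at hXY
    obtain ⟨hX, hYX, hY⟩ := hXY
    have hσ (v : Fin n) :
        valueBlock X Y v = cutBlock p q ((Tuple.sort (blockKey X Y)).symm v) := by
      simpa using valueBlock_sort_apply hpq hYX hX hY ((Tuple.sort (blockKey X Y)).symm v)
    refine Sigma.ext ?_ (heq_of_eq ?_) <;> ext v <;>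
      simp only [prefixImages, mem_filter, mem_univ, true_and]
    · rw [← valueBlock_le_one_iff hYX, hσ, cutBlock_le_one_iff hpq]
    · rw [← valueBlock_le_zero_iff, hσ, cutBlock_le_zero_iff]

end Blocks

end

theorem U_two_ascents (n t u : ℕ) (hu : 1 ≤ u) (hut : u < t) (htn : t < n) :
    (U n (2 ^ (t - 1) + 2 ^ (u - 1)) : ℤ) =
      ((Nat.choose t u : ℤ) - 1) * Nat.choose n t - Nat.choose n u + 1 := by
  set a : Fin (n - 1) := ⟨n - 1 - t, by omega⟩
  set b : Fin (n - 1) := ⟨n - 1 - u, by omega⟩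
  have hab : a ≠ b := by simp [a, b, Fin.ext_iff]; omega
  have hk : 2 ^ (t - 1) + 2 ^ (u - 1) = ∑ i ∈ {a, b}, 2 ^ (n - 2 - i.val) := by
    rw [sum_pair hab]
    congr 2 <;> simp only [a, b] <;> omega
  have hcuts : {a, b} = cuts (n - t) (n - u) n ∧ {a} = cuts (n - t) (n - t) n ∧
      {b} = cuts (n - u) (n - u) n ∧ ∅ = cuts 0 0 n := by
    refine ⟨?_, ?_, ?_, ?_⟩ <;> ext i <;> simp [cuts, a, b, Fin.ext_iff] <;> omega
  have hU : U n (2 ^ (t - 1) + 2 ^ (u - 1)) = #{π | ascents π = {a, b}} := by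
    simp only [U, hk, updownIndex_eq_iff]
  have hIE := card_filter_eq_pair_add univ ascents hab
  rw [← hU, hcuts.1, hcuts.2.1, hcuts.2.2.1, hcuts.2.2.2,
    card_ascents_subset_cuts le_rfl (by omega), card_ascents_subset_cuts le_rfl (by omega),
    card_ascents_subset_cuts (by omega) (by omega), card_ascents_subset_cuts le_rfl (by omega)] at hIE
  have hchoose : n.choose (n - u) * (n - u).choose (n - t) = n.choose t * t.choose u := by
    rw [Nat.choose_mul (by omega), Nat.sub_sub_self htn.le, show n - u - (n - t) = t - u by omega,
      Nat.choose_symm htn.le, Nat.choose_symm hut.le]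
  simp only [Nat.choose_self, Nat.choose_zero_right, mul_one] at hIE
  rw [hchoose, Nat.choose_symm htn.le, Nat.choose_symm (by omega)] at hIE
  zify at hIE
  linear_combination hIE
end

section
/- Let U(n,k) be the number of permutations of {1,…,n} with up-down index k. Then for all integers n ≥ 1 and r with 1 ≤ r ≤ n−1, Σ_{k=0}^{2^r − 1} U(n,k) = n·(n−1)···(n−r+1) (the falling factorial of n of length r). -/
open Finset

/-!
The up-down index is a sum of distinct powers of two, one per ascent, the early ascents carrying
the large ones; so it is below `2 ^ r` exactly when the first `n - r` values of the permutation
decrease. Such a permutation is determined by the injection `Fin r ↪ Fin n` formed by its last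
`r` values: the first `n - r` values must be the complementary set listed in decreasing order.
Hence there are `n (n - 1) ⋯ (n - r + 1)` of them.
-/

theorem Nat.geomSum_lt_pow_iff {m r : ℕ} {s : Finset ℕ} (hm : 2 ≤ m) :
    ∑ k ∈ s, m ^ k < m ^ r ↔ ∀ k ∈ s, k < r := by
  simpa [Colex.toColex_lt_singleton] using
    geomSum_lt_geomSum_iff_toColex_lt_toColex hm (s := s) (t := {r})

theorem Fin.strictAnti_iff_forall_add_one_lt {α : Type*} [Preorder α] {s : ℕ}
    {f : Fin s → α} :
    StrictAnti f ↔ ∀ i (hi : i + 1 < s), f ⟨i + 1, hi⟩ < f ⟨i, by omega⟩ := by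
  cases s with
  | zero => exact ⟨fun _ i hi => by omega, fun _ i => i.elim0⟩
  | succ t =>
    exact Fin.strictAnti_iff_succ_lt.trans
      ⟨fun h i hi => h ⟨i, by omega⟩, fun h i => h i (Nat.succ_lt_succ i.2)⟩

theorem updownIndex_lt_two_pow_iff {n r : ℕ} (π : Equiv.Perm (Fin n)) :
    updownIndex n π < 2 ^ r ↔
      ∀ i (hi : i + 1 + r < n), π ⟨i + 1, by omega⟩ < π ⟨i, by omega⟩ := by
  have hexp : Function.Injective fun i : Fin (n - 1) => n - 2 - i := by
    intro i j hij
    have := i.2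
    have := j.2
    simp only at hij
    ext
    omega
  rw [updownIndex, ← sum_filter, ← sum_image hexp.injOn, Nat.geomSum_lt_pow_iff le_rfl]
  simp only [mem_image, mem_filter, mem_univ, true_and, forall_exists_index, and_imp,
    forall_apply_eq_imp_iff₂]
  constructor
  · intro h i hi
    by_contra hasc
    have hasc : π ⟨i, by omega⟩ < π ⟨i + 1, by omega⟩ :=
      (not_lt.1 hasc).lt_of_ne (π.injective.ne (by simp))
    have : n - 2 - i < r := h ⟨i, by omega⟩ hasc
    omega
  · intro h i hasc
    by_contra
    exact lt_asymm hasc (h i (by omega))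

theorem updownIndex_add_lt_two_pow_iff {s r : ℕ} (π : Equiv.Perm (Fin (s + r))) :
    updownIndex (s + r) π < 2 ^ r ↔ StrictAnti (π ∘ Fin.castAdd r) := by
  rw [updownIndex_lt_two_pow_iff, Fin.strictAnti_iff_forall_add_one_lt]
  exact ⟨fun h i hi => h i (by omega), fun h i hi => h i (by omega)⟩

theorem Equiv.Perm.eq_of_strictAnti_comp_castAdd {s r : ℕ} {π σ : Equiv.Perm (Fin (s + r))}
    (hπ : StrictAnti (π ∘ Fin.castAdd r)) (hσ : StrictAnti (σ ∘ Fin.castAdd r))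
    (h : π ∘ Fin.natAdd s = σ ∘ Fin.natAdd s) : π = σ := by
  have hrange (τ : Equiv.Perm (Fin (s + r))) :
      Set.range (τ ∘ Fin.castAdd r) = (Set.range (τ ∘ Fin.natAdd s))ᶜ := by
    have hl : ⇑(finSumFinEquiv.trans τ) ∘ Sum.inl = τ ∘ Fin.castAdd r := by ext; simp
    have hr : ⇑(finSumFinEquiv.trans τ) ∘ Sum.inr = τ ∘ Fin.natAdd s := by ext; simp
    rw [← hl, ← hr, Set.range_comp, Set.range_comp, ← Set.compl_range_inr, Equiv.image_compl]
  have hleft : π ∘ Fin.castAdd r = σ ∘ Fin.castAdd r :=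
    (hπ.range_inj hσ).1 (by rw [hrange, hrange, h])
  exact Equiv.ext <| Fin.addCases (congrFun hleft) (congrFun h)

theorem Equiv.Perm.exists_strictAnti_comp_castAdd {s r : ℕ} (f : Fin r ↪ Fin (s + r)) :
    ∃ π : Equiv.Perm (Fin (s + r)),
      StrictAnti (π ∘ Fin.castAdd r) ∧ π ∘ Fin.natAdd s = f := by
  set t : Finset (Fin (s + r)) := (univ.map f)ᶜ
  have ht : #t = s := by simp [t, card_compl]
  set g : Fin s → Fin (s + r) := fun i => t.orderEmbOfFin ht i.rev
  have hg : StrictAnti g := (t.orderEmbOfFin ht).strictMono.comp_strictAnti Fin.rev_strictAnti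
  have hinj : Function.Injective (Fin.append g f) := by
    refine Fin.append_injective_iff.2 ⟨hg.injective, f.injective, fun i j hij => ?_⟩
    have := t.orderEmbOfFin_mem ht i.rev
    simp_all [t, g]
  refine ⟨Equiv.ofBijective _ (Finite.injective_iff_bijective.1 hinj), ?_, ?_⟩
  · convert hg
    ext
    simp
  · ext
    simp

theorem card_perm_strictAnti_comp_castAdd (s r : ℕ) :
    #{π : Equiv.Perm (Fin (s + r)) | StrictAnti (π ∘ Fin.castAdd r)} =
      (s + r).descFactorial r := by
  have hbij : Function.Bijective
      fun π : {π : Equiv.Perm (Fin (s + r)) // StrictAnti (π ∘ Fin.castAdd r)} =>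
        (Fin.natAddEmb s).trans π.1.toEmbedding := by
    constructor
    · rintro ⟨π, hπ⟩ ⟨σ, hσ⟩ h
      exact Subtype.ext (π.eq_of_strictAnti_comp_castAdd hπ hσ (congrArg DFunLike.coe h))
    · intro f
      obtain ⟨π, hπ, hf⟩ := Equiv.Perm.exists_strictAnti_comp_castAdd f
      exact ⟨⟨π, hπ⟩, DFunLike.coe_injective hf⟩
  rw [← Fintype.card_subtype, Fintype.card_of_bijective hbij, Fintype.card_embedding_eq,
    Fintype.card_fin, Fintype.card_fin]

theorem sum_range_U (n N : ℕ) :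
    ∑ k ∈ range N, U n k = #{π : Equiv.Perm (Fin n) | updownIndex n π < N} := by
  rw [card_eq_sum_card_fiberwise (f := updownIndex n) (t := range N)
    fun π hπ => mem_range.2 (mem_filter.1 hπ).2]
  refine sum_congr rfl fun k hk => ?_
  rw [U, filter_filter]
  congr 1
  exact filter_congr fun π _ => ⟨fun h => ⟨h ▸ mem_range.1 hk, h⟩, And.right⟩

theorem sum_U_descFactorial_general (n r : ℕ) (hrn : r ≤ n - 1) :
    ∑ k ∈ Finset.range (2 ^ r), U n k = Nat.descFactorial n r := by
  obtain ⟨s, rfl⟩ : ∃ s, n = s + r := ⟨n - r, by omega⟩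
  rw [sum_range_U, ← card_perm_strictAnti_comp_castAdd]
  exact congrArg card (filter_congr fun π _ => updownIndex_add_lt_two_pow_iff π)

theorem sum_U_descFactorial (n r : ℕ) (hr : 1 ≤ r) (hrn : r ≤ n - 1) (hn : 1 ≤ n) :
    ∑ k ∈ Finset.range (2 ^ r), U n k = Nat.descFactorial n r :=
  sum_U_descFactorial_general n r hrn
end
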